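/- Let u^1, u^2, q be complex numbers with |q e^{u^2}| < 1, let v(u) be given by v^1 = e^{u^1}(1+q e^{u^2}), v^2 = 2u^1+u^2, let \hat{F}(u) := (1/2)(u^1)^2 u^2 + (1/3)(u^1)^3 + \mathrm{Li}_3(q e^{u^2}) with \mathrm{Li}_3(x) = \sum_{n\ge1} x^n/n^3, and let F(v) := (1/2)(v^1)^2 v^2 + q e^{v^2}. Set \hat\eta := ((2,1),(1,0)), \eta := ((0,1),(1,0)), let J be the Jacobian matrix of v(u) and J^{-1} its inverse (defined since det J = e^{u^1}(1-q e^{u^2}) \ne 0), and define c^{\sigma\rho}_\delta := \eta^{\sigma a}\eta^{\rho b}\,\partial^3 F/\partial v^a \partial v^b \partial v^\delta. Then for all \alpha,\beta,\gamma \in \{1,2\}: \partial^3 \hat{F}/\partial u^\alpha \partial u^\beta \partial u^\gamma = \sum \hat\eta_{\alpha\xi}\,\hat\eta_{\beta\zeta}\,(J^{-1})^\xi_\sigma\,(J^{-1})^\zeta_\rho\, J^\delta_\gamma\; c^{\sigma\rho}_\delta(v(u)), where (J^{-1})^\xi_\sigma = \partial u^\xi/\partial v^\sigma and J^\delta_\gamma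 = \partial v^\delta/\partial u^\gamma, summation over repeated indices \xi,\zeta,\sigma,\rho,\delta \in \{1,2\}. -/

import Mathlib

open Matrix

/-- The trilogarithm `Li₃(x) = ∑_{n≥1} x^n/n³`. -/
noncomputable def Li3 (x : ℂ) : ℂ := ∑' n : ℕ, x ^ (n + 1) / ((n : ℂ) + 1) ^ 3

/-- `F̂(u) = (1/2)(u¹)²u² + (1/3)(u¹)³ + Li₃(q e^{u²})`. -/
noncomputable def Fhat (q u1 u2 : ℂ) : ℂ :=
  (1 / 2) * u1 ^ 2 * u2 + (1 / 3) * u1 ^ 3 + Li3 (q * Complex.exp u2)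

/-- `F(v) = (1/2)(v¹)²v² + q e^{v²}`. -/
noncomputable def FP1 (q v1 v2 : ℂ) : ℂ := (1 / 2) * v1 ^ 2 * v2 + q * Complex.exp v2

/-- Partial derivative of a function of two complex variables in the
direction indexed by `Fin 2`. -/
noncomputable def pd : Fin 2 → (ℂ → ℂ → ℂ) → ℂ → ℂ → ℂ
  | 0, g => fun a b => deriv (fun x => g x b) a
  | 1, g => fun a b => deriv (fun y => g a y) b

/-- The Jacobian matrix `J^δ_γ = ∂v^δ/∂u^γ` of the diagonal change of
variables `v¹ = e^{u¹}(1+q e^{u²})`, `v² = 2u¹+u²`. -/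
noncomputable def Jmat (q u1 u2 : ℂ) : Matrix (Fin 2) (Fin 2) ℂ :=
  !![Complex.exp u1 * (1 + q * Complex.exp u2), q * Complex.exp (u1 + u2); 2, 1]

/-- The metric matrix `η̂ = ((2,1),(1,0))` of `F^{X,di}`. -/
def etaHat : Matrix (Fin 2) (Fin 2) ℂ := !![2, 1; 1, 0]

/-- The inverse metric matrix `η⁻¹ = ((0,1),(1,0))` of the `P¹` Frobenius manifold. -/
def etaUp : Matrix (Fin 2) (Fin 2) ℂ := !![0, 1; 1, 0]

/-! ### Auxiliary material -/

section Aux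

lemma isOpen_S (q : ℂ) (r : ℝ) : IsOpen {y : ℂ | ‖q * Complex.exp y‖ < r} :=
  isOpen_lt (continuous_norm.comp (continuous_const.mul Complex.continuous_exp))
    continuous_const

lemma convex_S (q : ℂ) (r : ℝ) : Convex ℝ {y : ℂ | ‖q * Complex.exp y‖ < r} := by
  intro x hx y hy a b ha hb hab
  simp only [Set.mem_setOf_eq, norm_mul, Complex.norm_exp] at *
  have hre : (a • x + b • y).re = a * x.re + b * y.re := by
    simp [Complex.add_re, Complex.smul_re]
  rw [hre]
  rcases le_total x.re y.re with h | h
  · calc ‖q‖ * Real.exp (a * x.re + b * y.re)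
        ≤ ‖q‖ * Real.exp y.re := by
          apply mul_le_mul_of_nonneg_left _ (norm_nonneg _)
          apply Real.exp_le_exp.2
          calc a * x.re + b * y.re ≤ a * y.re + b * y.re := by nlinarith
            _ = y.re := by rw [← add_mul, hab, one_mul]
      _ < r := hy
  · calc ‖q‖ * Real.exp (a * x.re + b * y.re)
        ≤ ‖q‖ * Real.exp x.re := by
          apply mul_le_mul_of_nonneg_left _ (norm_nonneg _)
          apply Real.exp_le_exp.2
          calc a * x.re + b * y.re ≤ a * x.re + b * x.re := by nlinarith
            _ = x.re := by rw [← add_mul, hab, one_mul]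
      _ < r := hx

lemma key (q : ℂ) (c : ℕ → ℂ) (hc : ∀ n : ℕ, ‖c n‖ ≤ 1) (u : ℂ)
    (h : ‖q * Complex.exp u‖ < 1) :
    HasDerivAt (fun y => ∑' n : ℕ, c n * (q * Complex.exp y) ^ (n + 1))
      (∑' n : ℕ, ((n : ℂ) + 1) * c n * (q * Complex.exp u) ^ (n + 1)) u := by
  set r : ℝ := (‖q * Complex.exp u‖ + 1) / 2 with hrdef
  have hr0 : 0 ≤ r := by positivity
  have hr1 : r < 1 := by simp only [hrdef]; linarith
  have hur : ‖q * Complex.exp u‖ < r := by simp only [hrdef]; linarith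
  set t : Set ℂ := {y : ℂ | ‖q * Complex.exp y‖ < r} with ht
  have hut : u ∈ t := hur
  have hsum : Summable (fun n : ℕ => ((n : ℝ) + 1) * r ^ (n + 1)) := by
    have := summable_pow_mul_geometric_of_norm_lt_one (R := ℝ) 1 (r := r)
      (by rwa [Real.norm_eq_abs, _root_.abs_of_nonneg hr0])
    simp only [pow_one] at this
    have h2 := (summable_nat_add_iff (f := fun n : ℕ => (n : ℝ) * r ^ n) 1).2 this
    simpa using h2
  refine hasDerivAt_tsum_of_isPreconnected hsum (isOpen_S q r)
    ((convex_S q r).isPreconnected)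
    (g' := fun (n : ℕ) (y : ℂ) => ((n : ℂ) + 1) * c n * (q * Complex.exp y) ^ (n + 1))
    (fun n y _ => ?_) (fun n y hy => ?_) hut ?_ hut
  · have h1 : HasDerivAt (fun y : ℂ => (q * Complex.exp y) ^ (n + 1))
        (((n : ℂ) + 1) * (q * Complex.exp y) ^ (n + 1)) y := by
      have h2 := (((Complex.hasDerivAt_exp y).const_mul q).fun_pow (n + 1))
      refine h2.congr_deriv ?_
      rw [Nat.add_sub_cancel, pow_succ]
      push_cast
      ring
    have := h1.const_mul (c n)
    refine this.congr_deriv ?_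
    ring
  · have hy' : ‖q * Complex.exp y‖ < r := hy
    have habs : ‖(n : ℂ) + 1‖ = (n : ℝ) + 1 := by
      rw [show ((n : ℂ) + 1) = ((n + 1 : ℕ) : ℂ) by push_cast; ring, Complex.norm_natCast]
      push_cast; ring
    calc ‖((n : ℂ) + 1) * c n * (q * Complex.exp y) ^ (n + 1)‖
        = ((n : ℝ) + 1) * ‖c n‖ * ‖q * Complex.exp y‖ ^ (n + 1) := by
          rw [norm_mul, norm_mul, norm_pow, habs]
      _ ≤ ((n : ℝ) + 1) * 1 * r ^ (n + 1) := by
          apply mul_le_mul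
          · exact mul_le_mul_of_nonneg_left (hc n) (by positivity)
          · exact pow_le_pow_left₀ (norm_nonneg _) (le_of_lt hy') _
          · positivity
          · positivity
      _ = ((n : ℝ) + 1) * r ^ (n + 1) := by ring
  · apply Summable.of_norm
    have hg : Summable (fun n : ℕ => r ^ (n + 1)) := by
      exact
        (summable_geometric_of_lt_one hr0 hr1).comp_injective (add_left_injective 1)
    refine Summable.of_nonneg_of_le (fun n => norm_nonneg _) (fun n => ?_) hg
    calc ‖c n * (q * Complex.exp u) ^ (n + 1)‖
        = ‖c n‖ * ‖q * Complex.exp u‖ ^ (n + 1) := by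
          rw [norm_mul, norm_pow]
      _ ≤ 1 * r ^ (n + 1) := by
          apply mul_le_mul (hc n)
            (pow_le_pow_left₀ (norm_nonneg _) (le_of_lt hur) _) (by positivity)
            one_pos.le
      _ = r ^ (n + 1) := one_mul _

/-- The dilogarithm. -/
noncomputable def Li2 (x : ℂ) : ℂ := ∑' n : ℕ, x ^ (n + 1) / ((n : ℂ) + 1) ^ 2

/-- `Li₁`. -/
noncomputable def Li1 (x : ℂ) : ℂ := ∑' n : ℕ, x ^ (n + 1) / ((n : ℂ) + 1)

lemma habs_nat (n : ℕ) : ‖(n : ℂ) + 1‖ = (n : ℝ) + 1 := by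
  rw [show ((n : ℂ) + 1) = ((n + 1 : ℕ) : ℂ) by push_cast; ring, Complex.norm_natCast]
  push_cast; ring

lemma hn_ne (n : ℕ) : ((n : ℂ) + 1) ≠ 0 := by
  intro hcon
  have := habs_nat n
  rw [hcon] at this
  simp at this
  have := Nat.cast_nonneg (α := ℝ) n
  linarith

lemma one_le_pow_nat (n k : ℕ) : (1 : ℝ) ≤ ((n : ℝ) + 1) ^ k := by
  apply one_le_pow₀
  have := Nat.cast_nonneg (α := ℝ) n
  linarith

lemma abs_inv_pow_le (n k : ℕ) : ‖(((n : ℂ) + 1) ^ k)⁻¹‖ ≤ 1 := by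
  rw [norm_inv, norm_pow, habs_nat]
  rw [inv_le_one_iff₀]
  right
  exact one_le_pow_nat n k

lemma hasDerivAt_Li3 (q u : ℂ) (h : ‖q * Complex.exp u‖ < 1) :
    HasDerivAt (fun y => Li3 (q * Complex.exp y)) (Li2 (q * Complex.exp u)) u := by
  have hk := key q (fun n => (((n : ℂ) + 1) ^ 3)⁻¹) (fun n => abs_inv_pow_le n 3) u h
  convert hk using 2 with y
  · unfold Li3
    exact tsum_congr fun n => by rw [div_eq_mul_inv, mul_comm]
  · unfold Li2
    refine tsum_congr fun n => ?_
    have := hn_ne n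
    field_simp

lemma hasDerivAt_Li2 (q u : ℂ) (h : ‖q * Complex.exp u‖ < 1) :
    HasDerivAt (fun y => Li2 (q * Complex.exp y)) (Li1 (q * Complex.exp u)) u := by
  have hk := key q (fun n => (((n : ℂ) + 1) ^ 2)⁻¹) (fun n => abs_inv_pow_le n 2) u h
  convert hk using 2 with y
  · unfold Li2
    exact tsum_congr fun n => by rw [div_eq_mul_inv, mul_comm]
  · unfold Li1
    refine tsum_congr fun n => ?_
    have := hn_ne n
    field_simp

lemma hasDerivAt_Li1 (q u : ℂ) (h : ‖q * Complex.exp u‖ < 1) :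
    HasDerivAt (fun y => Li1 (q * Complex.exp y))
      (q * Complex.exp u * (1 - q * Complex.exp u)⁻¹) u := by
  have hk := key q (fun n => ((n : ℂ) + 1)⁻¹) (fun n => by simpa using abs_inv_pow_le n 1) u h
  convert hk using 2 with y
  · unfold Li1
    exact tsum_congr fun n => by rw [div_eq_mul_inv, mul_comm]
  · have h1 : ∀ n : ℕ, ((n : ℂ) + 1) * ((n : ℂ) + 1)⁻¹ * (q * Complex.exp u) ^ (n + 1)
        = (q * Complex.exp u) * (q * Complex.exp u) ^ n := by
      intro n
      rw [mul_inv_cancel₀ (hn_ne n), one_mul, pow_succ]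
      ring
    rw [tsum_congr h1, tsum_mul_left,
      tsum_geometric_of_norm_lt_one h]

/-! ### pd lemmas -/

lemma pd0_eq (g : ℂ → ℂ → ℂ) : pd 0 g = fun a b => deriv (fun x => g x b) a := rfl
lemma pd1_eq (g : ℂ → ℂ → ℂ) : pd 1 g = fun a b => deriv (fun y => g a y) b := rfl

lemma pd0_FP1 (q : ℂ) : pd 0 (FP1 q) = fun a b => a * b := by
  funext a b
  rw [pd0_eq]
  have h : HasDerivAt (fun x : ℂ => (1/2) * x^2 * b + q * Complex.exp b) (a * b) a := by
    have := (((hasDerivAt_pow 2 a).const_mul ((1:ℂ)/2)).mul_const b).add_const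
      (q * Complex.exp b)
    refine this.congr_deriv ?_
    push_cast; ring
  exact h.deriv

lemma pd1_FP1 (q : ℂ) : pd 1 (FP1 q) = fun a b => (1/2) * a^2 + q * Complex.exp b := by
  funext a b
  rw [pd1_eq]
  have h1 : HasDerivAt (fun y : ℂ => (1/2) * a^2 * y) ((1/2) * a^2) b := by
    simpa using (hasDerivAt_id b).const_mul ((1/2) * a^2)
  have h2 : HasDerivAt (fun y : ℂ => q * Complex.exp y) (q * Complex.exp b) b :=
    (Complex.hasDerivAt_exp b).const_mul q
  exact (h1.add h2).deriv

lemma pd00_FP1 (q : ℂ) : pd 0 (pd 0 (FP1 q)) = fun _ b => b := by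
  rw [pd0_FP1]; funext a b; rw [pd0_eq]
  exact (hasDerivAt_mul_const b).deriv

lemma pd10_FP1 (q : ℂ) : pd 1 (pd 0 (FP1 q)) = fun a _ => a := by
  rw [pd0_FP1]; funext a b; rw [pd1_eq]
  have : HasDerivAt (fun y : ℂ => a * y) a b := by
    simpa using (hasDerivAt_id b).const_mul a
  exact this.deriv

lemma pd01_FP1 (q : ℂ) : pd 0 (pd 1 (FP1 q)) = fun a _ => a := by
  rw [pd1_FP1]; funext a b; rw [pd0_eq]
  have : HasDerivAt (fun x : ℂ => (1/2) * x^2 + q * Complex.exp b) a a := by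
    have := ((hasDerivAt_pow 2 a).const_mul ((1:ℂ)/2)).add_const (q * Complex.exp b)
    refine this.congr_deriv ?_
    push_cast; ring
  exact this.deriv

lemma pd11_FP1 (q : ℂ) : pd 1 (pd 1 (FP1 q)) = fun _ b => q * Complex.exp b := by
  rw [pd1_FP1]; funext a b; rw [pd1_eq]
  have : HasDerivAt (fun y : ℂ => (1/2) * a^2 + q * Complex.exp y) (q * Complex.exp b) b := by
    simpa using ((Complex.hasDerivAt_exp b).const_mul q).const_add ((1/2) * a^2)
  exact this.deriv

lemma pd000_FP1 (q x y : ℂ) : pd 0 (pd 0 (pd 0 (FP1 q))) x y = 0 := by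
  rw [pd00_FP1, pd0_eq]; simp

lemma pd100_FP1 (q x y : ℂ) : pd 1 (pd 0 (pd 0 (FP1 q))) x y = 1 := by
  rw [pd00_FP1, pd1_eq]; simp

lemma pd010_FP1 (q x y : ℂ) : pd 0 (pd 1 (pd 0 (FP1 q))) x y = 1 := by
  rw [pd10_FP1, pd0_eq]; simp

lemma pd110_FP1 (q x y : ℂ) : pd 1 (pd 1 (pd 0 (FP1 q))) x y = 0 := by
  rw [pd10_FP1, pd1_eq]; simp

lemma pd001_FP1 (q x y : ℂ) : pd 0 (pd 0 (pd 1 (FP1 q))) x y = 1 := by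
  rw [pd01_FP1, pd0_eq]; simp

lemma pd101_FP1 (q x y : ℂ) : pd 1 (pd 0 (pd 1 (FP1 q))) x y = 0 := by
  rw [pd01_FP1, pd1_eq]; simp

lemma pd011_FP1 (q x y : ℂ) : pd 0 (pd 1 (pd 1 (FP1 q))) x y = 0 := by
  rw [pd11_FP1, pd0_eq]; simp

lemma pd111_FP1 (q x y : ℂ) : pd 1 (pd 1 (pd 1 (FP1 q))) x y = q * Complex.exp y := by
  rw [pd11_FP1, pd1_eq]
  exact ((Complex.hasDerivAt_exp y).const_mul q).deriv

/-! Fhat derivatives -/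

lemma pd0_Fhat (q : ℂ) : pd 0 (Fhat q) = fun a b => a * b + a ^ 2 := by
  funext a b
  rw [pd0_eq]
  have h : HasDerivAt (fun x => Fhat q x b) (a * b + a ^ 2) a := by
    unfold Fhat
    have h1 := ((hasDerivAt_pow 2 a).const_mul ((1:ℂ)/2)).mul_const b
    have h2 := (hasDerivAt_pow 3 a).const_mul ((1:ℂ)/3)
    have := (h1.add h2).add_const (Li3 (q * Complex.exp b))
    refine this.congr_deriv ?_
    push_cast; ring
  exact h.deriv

lemma pd1_Fhat (q a b : ℂ) (h : ‖q * Complex.exp b‖ < 1) :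
    pd 1 (Fhat q) a b = (1/2) * a^2 + Li2 (q * Complex.exp b) := by
  rw [pd1_eq]
  have h1 : HasDerivAt (fun y : ℂ => (1/2) * a^2 * y) ((1/2) * a^2) b := by
    simpa using (hasDerivAt_id b).const_mul ((1/2) * a^2)
  have hd : HasDerivAt (fun y => Fhat q a y) ((1/2) * a^2 + Li2 (q * Complex.exp b)) b := by
    unfold Fhat
    exact (h1.add_const ((1/3) * a^3)).add (hasDerivAt_Li3 q b h)
  exact hd.deriv

lemma pd00_Fhat (q : ℂ) : pd 0 (pd 0 (Fhat q)) = fun a b => b + 2 * a := by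
  rw [pd0_Fhat]; funext a b; rw [pd0_eq]
  have : HasDerivAt (fun x : ℂ => x * b + x ^ 2) (b + 2 * a) a := by
    have := (hasDerivAt_mul_const (x := a) b).add (hasDerivAt_pow 2 a)
    refine this.congr_deriv ?_
    push_cast; ring
  exact this.deriv

lemma pd10_Fhat (q : ℂ) : pd 1 (pd 0 (Fhat q)) = fun a _ => a := by
  rw [pd0_Fhat]; funext a b; rw [pd1_eq]
  have : HasDerivAt (fun y : ℂ => a * y + a ^ 2) a b := by
    simpa using ((hasDerivAt_id b).const_mul a).add_const (a ^ 2)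
  exact this.deriv

lemma pd01_Fhat (q a b : ℂ) (h : ‖q * Complex.exp b‖ < 1) :
    pd 0 (pd 1 (Fhat q)) a b = a := by
  show deriv (fun x => pd 1 (Fhat q) x b) a = a
  have hfun : (fun x => pd 1 (Fhat q) x b) = fun x => (1/2) * x^2 + Li2 (q * Complex.exp b) :=
    funext fun x => pd1_Fhat q x b h
  rw [hfun]
  have : HasDerivAt (fun x : ℂ => (1/2) * x^2 + Li2 (q * Complex.exp b)) a a := by
    have := ((hasDerivAt_pow 2 a).const_mul ((1:ℂ)/2)).add_const (Li2 (q * Complex.exp b))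
    refine this.congr_deriv ?_
    push_cast; ring
  exact this.deriv

lemma pd11_Fhat (q a b : ℂ) (h : ‖q * Complex.exp b‖ < 1) :
    pd 1 (pd 1 (Fhat q)) a b = Li1 (q * Complex.exp b) := by
  show deriv (fun y => pd 1 (Fhat q) a y) b = _
  have hev : (fun y => pd 1 (Fhat q) a y) =ᶠ[nhds b]
      fun y => (1/2) * a^2 + Li2 (q * Complex.exp y) := by
    filter_upwards [(isOpen_S q 1).mem_nhds h] with y hy using pd1_Fhat q a y hy
  rw [hev.deriv_eq]
  exact ((hasDerivAt_Li2 q b h).const_add ((1/2) * a^2)).deriv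

-- third derivatives of Fhat at a point (x, y) with |q e^y| < 1
variable {q x y : ℂ}

lemma pd000_Fhat (q x y : ℂ) : pd 0 (pd 0 (pd 0 (Fhat q))) x y = 2 := by
  rw [pd00_Fhat, pd0_eq]
  have : HasDerivAt (fun t : ℂ => y + 2 * t) 2 x := by
    simpa using ((hasDerivAt_id x).const_mul (2:ℂ)).const_add y
  exact this.deriv

lemma pd100_Fhat (q x y : ℂ) : pd 1 (pd 0 (pd 0 (Fhat q))) x y = 1 := by
  rw [pd00_Fhat, pd1_eq]
  have : HasDerivAt (fun t : ℂ => t + 2 * x) 1 y := by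
    simpa using (hasDerivAt_id y).add_const (2 * x)
  exact this.deriv

lemma pd010_Fhat (q x y : ℂ) : pd 0 (pd 1 (pd 0 (Fhat q))) x y = 1 := by
  rw [pd10_Fhat, pd0_eq]; simp

lemma pd110_Fhat (q x y : ℂ) : pd 1 (pd 1 (pd 0 (Fhat q))) x y = 0 := by
  rw [pd10_Fhat, pd1_eq]; simp

lemma pd001_Fhat (q x y : ℂ) (h : ‖q * Complex.exp y‖ < 1) :
    pd 0 (pd 0 (pd 1 (Fhat q))) x y = 1 := by
  show deriv (fun t => pd 0 (pd 1 (Fhat q)) t y) x = 1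
  have hfun : (fun t => pd 0 (pd 1 (Fhat q)) t y) = fun t => t :=
    funext fun t => pd01_Fhat q t y h
  rw [hfun]
  simp

lemma pd101_Fhat (q x y : ℂ) (h : ‖q * Complex.exp y‖ < 1) :
    pd 1 (pd 0 (pd 1 (Fhat q))) x y = 0 := by
  show deriv (fun t => pd 0 (pd 1 (Fhat q)) x t) y = 0
  have hev : (fun t => pd 0 (pd 1 (Fhat q)) x t) =ᶠ[nhds y] fun _ => x := by
    filter_upwards [(isOpen_S q 1).mem_nhds h] with t ht using pd01_Fhat q x t ht
  rw [hev.deriv_eq]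
  simp

lemma pd011_Fhat (q x y : ℂ) (h : ‖q * Complex.exp y‖ < 1) :
    pd 0 (pd 1 (pd 1 (Fhat q))) x y = 0 := by
  show deriv (fun t => pd 1 (pd 1 (Fhat q)) t y) x = 0
  have hfun : (fun t => pd 1 (pd 1 (Fhat q)) t y) = fun _ => Li1 (q * Complex.exp y) :=
    funext fun t => pd11_Fhat q t y h
  rw [hfun]
  simp

lemma pd111_Fhat (q x y : ℂ) (h : ‖q * Complex.exp y‖ < 1) :
    pd 1 (pd 1 (pd 1 (Fhat q))) x y
      = q * Complex.exp y * (1 - q * Complex.exp y)⁻¹ := by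
  show deriv (fun t => pd 1 (pd 1 (Fhat q)) x t) y = _
  have hev : (fun t => pd 1 (pd 1 (Fhat q)) x t) =ᶠ[nhds y]
      fun t => Li1 (q * Complex.exp t) := by
    filter_upwards [(isOpen_S q 1).mem_nhds h] with t ht using pd11_Fhat q x t ht
  rw [hev.deriv_eq]
  exact (hasDerivAt_Li1 q y h).deriv

/-! Jacobian inverse -/

lemma Jmat_inv (q u1 u2 : ℂ) (h : 1 - q * Complex.exp u2 ≠ 0) :
    (Jmat q u1 u2)⁻¹ = (Complex.exp u1 * (1 - q * Complex.exp u2))⁻¹ •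
      !![1, -(q * Complex.exp (u1 + u2)); -2, Complex.exp u1 * (1 + q * Complex.exp u2)] := by
  have hdet : (Jmat q u1 u2).det = Complex.exp u1 * (1 - q * Complex.exp u2) := by
    rw [Jmat, Matrix.det_fin_two_of, Complex.exp_add]
    ring
  rw [Matrix.inv_def, hdet, Ring.inverse_eq_inv']
  congr 1
  rw [Jmat, Matrix.adjugate_fin_two_of]

end Aux

set_option maxHeartbeats 4000000 in
/-- the defining relation (2.19) of the almost dual potential,
specialized to the `P¹` Frobenius manifold: `F^{X,di}` is the potential of the
almost dual of `M_{P¹}` in the flat coordinates `u¹, u²`. -/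
theorem stmt12 (q u1 u2 : ℂ) (hq : ‖q * Complex.exp u2‖ < 1)
    (α β γ : Fin 2) :
    pd α (pd β (pd γ (Fhat q))) u1 u2
    = ∑ ξ : Fin 2, ∑ ζ : Fin 2, ∑ σ : Fin 2, ∑ ρ : Fin 2, ∑ δ : Fin 2,
        etaHat α ξ * etaHat β ζ * (Jmat q u1 u2)⁻¹ ξ σ * (Jmat q u1 u2)⁻¹ ζ ρ
          * Jmat q u1 u2 δ γ
          * (∑ a : Fin 2, ∑ b : Fin 2, etaUp σ a * etaUp ρ b *
              pd a (pd b (pd δ (FP1 q)))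
                (Complex.exp u1 * (1 + q * Complex.exp u2)) (2 * u1 + u2)) := by
  have hw : 1 - q * Complex.exp u2 ≠ 0 := by
    intro hcon
    have : q * Complex.exp u2 = 1 := by linear_combination -hcon
    rw [this] at hq
    simp at hq
  have he1 : Complex.exp u1 ≠ 0 := Complex.exp_ne_zero u1
  have h2e : Complex.exp (2*u1+u2) = Complex.exp u1 * Complex.exp u1 * Complex.exp u2 := by
    rw [show 2*u1+u2 = u1+(u1+u2) by ring, Complex.exp_add, Complex.exp_add]; ring
  have hinvw : (1 - q * Complex.exp u2)⁻¹
      = Complex.exp u1 * (Complex.exp u1 * (1 - q * Complex.exp u2))⁻¹ := by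
    rw [mul_inv, ← mul_assoc, mul_inv_cancel₀ he1, one_mul]
  rw [Jmat_inv q u1 u2 hw]
  fin_cases α <;> fin_cases β <;> fin_cases γ <;>
    simp only [Fin.sum_univ_two, Fin.isValue] <;>
    simp only [Fin.mk_zero, Fin.mk_one] <;>
    simp only [pd000_FP1, pd100_FP1, pd010_FP1, pd110_FP1, pd001_FP1, pd101_FP1,
      pd011_FP1, pd111_FP1, pd000_Fhat, pd100_Fhat, pd010_Fhat, pd110_Fhat,
      pd001_Fhat q u1 u2 hq, pd101_Fhat q u1 u2 hq, pd011_Fhat q u1 u2 hq,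
      pd111_Fhat q u1 u2 hq] <;>
    simp only [etaHat, etaUp, Jmat, Matrix.smul_apply, Matrix.cons_val', Matrix.cons_val_zero,
      Matrix.cons_val_one, Matrix.head_cons, Matrix.empty_val', Matrix.cons_val_fin_one,
      Matrix.head_fin_const, Matrix.of_apply, Matrix.vecHead, Matrix.vecTail, smul_eq_mul,
      h2e, Complex.exp_add, hinvw]
  all_goals
    generalize hI : (Complex.exp u1 * (1 - q * Complex.exp u2))⁻¹ = I
  all_goals
    have hI1 : (Complex.exp u1 * (1 - q * Complex.exp u2)) * I = 1 := by
      rw [← hI]; exact mul_inv_cancel₀ (mul_ne_zero he1 hw)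
  · linear_combination (-(2:ℂ) * ((Complex.exp u1 * (1 - q * Complex.exp u2)) * I + 1)) * hI1
  · linear_combination (-(1:ℂ) * ((Complex.exp u1 * (1 - q * Complex.exp u2)) * I + 1)) * hI1
  · linear_combination (-(1:ℂ) * ((Complex.exp u1 * (1 - q * Complex.exp u2)) * I + 1)) * hI1
  · linear_combination (0:ℂ) * hI1
  · linear_combination (-(1:ℂ) * ((Complex.exp u1 * (1 - q * Complex.exp u2)) * I + 1)) * hI1
  · linear_combination (0:ℂ) * hI1
  · linear_combination (0:ℂ) * hI1
  · linear_combination (-(q * Complex.exp u2) * Complex.exp u1 * I) * hI1
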